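/- arXiv:2603.03709 — 3 statements merged into one kernel-verified Lean document; each statement's English description precedes it below -/
import Mathlib

section
/- For every integer j ≥ p one has A_j ≤ 2^(j−1) − 1; that is, the fixed-direction depth count stays strictly below half the degree 2^j of the j-th iterate. -/
/-!
The total `S j = A j + B j` satisfies `S j = 2 ^ (j - 1) + S (j - p)` for `j ≥ 1`, so it vanishes
below `0`, equals `1` at `0` and strictly increases along steps of `p`; hence `S j ≥ 1` for all
`j ≥ 0`. Since `A j = 2 ^ (j - 1) - S (j - p)`, this is the bound for `j ≥ p`.
-/

theorem one_le_of_lt_sub {S : ℤ → ℤ} {p : ℤ} (hp : 0 < p) (hneg : ∀ j < 0, 0 ≤ S j)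
    (h0 : 1 ≤ S 0) (hstep : ∀ j, 1 ≤ j → S (j - p) < S j) : ∀ j, 0 ≤ j → 1 ≤ S j := by
  intro j hj
  lift j to ℕ using hj
  induction j using Nat.strong_induction_on with
  | _ n ih =>
    rcases Nat.eq_zero_or_pos n with rfl | hn
    · exact h0
    have hlt := hstep n (by omega)
    rcases lt_or_ge ((n : ℤ) - p) 0 with hpn | hpn
    · linarith [hneg _ hpn]
    · have hprev := ih (n - p).toNat (by omega)
      rw [Int.toNat_of_nonneg hpn] at hprev
      linarith

theorem stmt_5 (p : ℤ) (hp : 2 ≤ p) (A B : ℤ → ℤ)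
    (hA0 : A 0 = 1) (hAneg : ∀ j : ℤ, j < 0 → A j = 0)
    (hBle : ∀ j : ℤ, j ≤ 0 → B j = 0)
    (hA : ∀ j : ℤ, 1 ≤ j → A j = 2 ^ (j - 1).toNat - (A (j - p) + B (j - p)))
    (hB : ∀ j : ℤ, 1 ≤ j → B j = 2 * (A (j - p) + B (j - p))) :
    ∀ j : ℤ, p ≤ j → A j ≤ 2 ^ (j - 1).toNat - 1 := by
  have hsum : ∀ j, 0 ≤ j → 1 ≤ A j + B j := by
    refine one_le_of_lt_sub (p := p) (by omega) (fun j hj => ?_) ?_ (fun j hj => ?_)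
    · simp [hAneg j hj, hBle j hj.le]
    · simp [hA0, hBle]
    · have hpow : (1 : ℤ) ≤ 2 ^ (j - 1).toNat := one_le_pow₀ (by norm_num)
      rw [hA j hj, hB j hj]
      linarith
  intro j hj
  rw [hA j (by omega)]
  linarith [hsum (j - p) (by omega)]
end

section
/- For every integer j ≥ p (with p ≥ 2), each of the three quantities A_j, B_j, C_j is at most 2^(j−1), and moreover A_j ≤ 2^(j−1) − 1 and C_j ≤ 2^(j−1) − 1. -/
/-!
Writing `S j = A j + B j`, the recursions add up to `S j = 2 ^ (j - 1) + S (j - p)` for `j ≥ 1`.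
Induction along steps of size `p` gives `1 ≤ S k ≤ 2 ^ k` for `k ≥ 0`, and for `j ≥ p` the three
bounds follow from `A j = 2 ^ (j - 1) - S (j - p)`, `B j = 2 S (j - p)` and
`C j ≤ 2 ^ j - S j = 2 ^ (j - 1) - S (j - p)`, the middle one using `p ≥ 2`.
-/

namespace Int

theorem induction_of_le_zero_of_sub {p : ℤ} (hp : 1 ≤ p) {P : ℤ → Prop}
    (base : ∀ k ≤ 0, P k) (step : ∀ k, 1 ≤ k → P (k - p) → P k) (k : ℤ) : P k := by
  suffices h : ∀ n : ℕ, ∀ k : ℤ, k ≤ n → P k from h k.toNat k (self_le_toNat k)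
  intro n
  induction n with
  | zero => exact fun k hk => base k (by exact_mod_cast hk)
  | succ n ih =>
    intro k hk
    rcases le_or_gt k 0 with hk0 | hk0
    · exact base k hk0
    · exact step k hk0 (ih _ (by push_cast at hk; omega))

theorem two_pow_toNat_le_two_pow_toNat {a b : ℤ} (h : a ≤ b) :
    (2 : ℤ) ^ a.toNat ≤ 2 ^ b.toNat :=
  pow_le_pow_right₀ one_le_two (toNat_le_toNat h)

theorem two_pow_toNat_add_one {k : ℤ} (hk : 0 ≤ k) :
    (2 : ℤ) ^ (k + 1).toNat = 2 * 2 ^ k.toNat := by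
  rw [show (k + 1).toNat = k.toNat + 1 by omega, pow_succ']

end Int

section LaggedSum

variable {p : ℤ} {S : ℤ → ℤ}

theorem one_le_of_rec_lagged (hp : 1 ≤ p) (h0 : S 0 = 1) (hneg : ∀ j < 0, S j = 0)
    (hrec : ∀ j, 1 ≤ j → S j = 2 ^ (j - 1).toNat + S (j - p)) (k : ℤ) (hk : 0 ≤ k) :
    1 ≤ S k := by
  induction k using Int.induction_of_le_zero_of_sub hp with
  | base k hk0 => rw [show k = 0 by omega, h0]
  | step k hk1 ih =>
    have hlag : 0 ≤ S (k - p) := by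
      rcases lt_or_ge (k - p) 0 with h | h
      · exact (hneg _ h).ge
      · exact zero_le_one.trans (ih h)
    have : (0 : ℤ) < 2 ^ (k - 1).toNat := by positivity
    rw [hrec k hk1]
    omega

theorem le_two_pow_of_rec_lagged (hp : 1 ≤ p) (h0 : S 0 = 1) (hneg : ∀ j < 0, S j = 0)
    (hrec : ∀ j, 1 ≤ j → S j = 2 ^ (j - 1).toNat + S (j - p)) (k : ℤ) :
    S k ≤ 2 ^ k.toNat := by
  induction k using Int.induction_of_le_zero_of_sub hp with
  | base k hk0 =>
    rcases hk0.lt_or_eq with h | rfl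
    · rw [hneg k h]; positivity
    · simp [h0]
  | step k hk1 ih =>
    have hdouble : (2 : ℤ) ^ k.toNat = 2 * 2 ^ (k - 1).toNat := by
      simpa using Int.two_pow_toNat_add_one (k := k - 1) (by omega)
    have hlag : (2 : ℤ) ^ (k - p).toNat ≤ 2 ^ (k - 1).toNat :=
      Int.two_pow_toNat_le_two_pow_toNat (by omega)
    rw [hrec k hk1]
    omega

end LaggedSum

theorem stmt_18 (p : ℤ) (hp : 2 ≤ p) (A B : ℤ → ℤ)
    (hA0 : A 0 = 1) (hAneg : ∀ j : ℤ, j < 0 → A j = 0)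
    (hBle : ∀ j : ℤ, j ≤ 0 → B j = 0)
    (hA : ∀ j : ℤ, 1 ≤ j → A j = 2 ^ (j - 1).toNat - (A (j - p) + B (j - p)))
    (hB : ∀ j : ℤ, 1 ≤ j → B j = 2 * (A (j - p) + B (j - p))) (C : ℤ → ℤ)
    (hC : ∀ j : ℤ, 1 ≤ j → C j = 2 ^ j.toNat - (A j + B j) - (if p ∣ j then 2 ^ (j / p).toNat else 0)) :
    ∀ j : ℤ, p ≤ j →
      A j ≤ 2 ^ (j - 1).toNat ∧ B j ≤ 2 ^ (j - 1).toNat ∧ C j ≤ 2 ^ (j - 1).toNat ∧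
      A j ≤ 2 ^ (j - 1).toNat - 1 ∧ C j ≤ 2 ^ (j - 1).toNat - 1 := by
  have hS0 : A 0 + B 0 = 1 := by rw [hA0, hBle 0 le_rfl, add_zero]
  have hSneg : ∀ j < 0, A j + B j = 0 := fun j hj => by rw [hAneg j hj, hBle j hj.le, add_zero]
  have hSrec : ∀ j, 1 ≤ j → A j + B j = 2 ^ (j - 1).toNat + (A (j - p) + B (j - p)) :=
    fun j hj => by rw [hA j hj, hB j hj]; ring
  intro j hj
  have hlag_pos := one_le_of_rec_lagged (by omega) hS0 hSneg hSrec (j - p) (by omega)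
  have hlag_le := le_two_pow_of_rec_lagged (by omega) hS0 hSneg hSrec (j - p)
  have hdouble_lag := Int.two_pow_toNat_add_one (k := j - p) (by omega)
  have hmono := Int.two_pow_toNat_le_two_pow_toNat (a := j - p + 1) (b := j - 1) (by omega)
  have hdouble : (2 : ℤ) ^ j.toNat = 2 * 2 ^ (j - 1).toNat := by
    simpa using Int.two_pow_toNat_add_one (k := j - 1) (by omega)
  have hcorr : (0 : ℤ) ≤ if p ∣ j then 2 ^ (j / p).toNat else 0 := by split_ifs <;> positivity
  have hAj := hA j (by omega)
  have hBj := hB j (by omega)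
  have hCj := hC j (by omega)
  refine ⟨?_, ?_, ?_, ?_, ?_⟩ <;> omega
end

section
/- For every integer j ≥ p (with p ≥ 2), one has A_j + B_j > 2^(j−1); equivalently, among integers j ≥ 1, A_j + B_j = 2^(j−1) holds if and only if 1 ≤ j ≤ p − 1. -/
/-!
Adding the two recurrences cancels the correction term: `S j := A j + B j` satisfies
`S j = 2 ^ (j - 1) + S (j - p)` for `j ≥ 1`. Since `S` vanishes on negative indices and `S 0 = 1`,
induction shows `S j > 0` for all `j ≥ 0`; hence the correction `S (j - p)` is zero exactly when
`j < p` and positive once `j ≥ p`.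
-/

section DelayedPowerRecurrence

variable {p : ℤ} {S : ℤ → ℤ}

theorem nonneg_of_delayed_pow_rec (hp : 0 < p) (hneg : ∀ j, j < 0 → S j = 0) (h0 : 0 ≤ S 0)
    (hrec : ∀ j, 1 ≤ j → S j = 2 ^ (j - 1).toNat + S (j - p)) (j : ℤ) : 0 ≤ S j := by
  suffices h : ∀ n : ℕ, ∀ j : ℤ, j < n → 0 ≤ S j from h (j.toNat + 1) j (by omega)
  intro n
  induction n with
  | zero => intro j hj; simp [hneg j (by exact_mod_cast hj)]
  | succ n ih =>
    intro j hj
    rcases lt_trichotomy j 0 with hj0 | rfl | hj0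
    · simp [hneg j hj0]
    · exact h0
    · rw [hrec j hj0]
      have := ih (j - p) (by push_cast at hj; omega)
      positivity

theorem pos_of_delayed_pow_rec (hp : 0 < p) (hneg : ∀ j, j < 0 → S j = 0) (h0 : 0 < S 0)
    (hrec : ∀ j, 1 ≤ j → S j = 2 ^ (j - 1).toNat + S (j - p)) {j : ℤ} (hj : 0 ≤ j) :
    0 < S j := by
  rcases hj.eq_or_lt with rfl | hj
  · exact h0
  · rw [hrec j hj]
    have := nonneg_of_delayed_pow_rec hp hneg h0.le hrec (j - p)
    positivity

theorem pow_lt_of_delayed_pow_rec (hp : 0 < p) (hneg : ∀ j, j < 0 → S j = 0) (h0 : 0 < S 0)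
    (hrec : ∀ j, 1 ≤ j → S j = 2 ^ (j - 1).toNat + S (j - p)) {j : ℤ} (hj : p ≤ j) :
    2 ^ (j - 1).toNat < S j := by
  rw [hrec j (by omega)]
  have := pos_of_delayed_pow_rec hp hneg h0 hrec (sub_nonneg.mpr hj)
  omega

theorem eq_pow_of_delayed_pow_rec (hneg : ∀ j, j < 0 → S j = 0)
    (hrec : ∀ j, 1 ≤ j → S j = 2 ^ (j - 1).toNat + S (j - p)) {j : ℤ} (hj₁ : 1 ≤ j)
    (hjp : j < p) : S j = 2 ^ (j - 1).toNat := by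
  rw [hrec j hj₁, hneg (j - p) (by omega), add_zero]

end DelayedPowerRecurrence

theorem stmt_19 (p : ℤ) (hp : 2 ≤ p) (A B : ℤ → ℤ)
    (hA0 : A 0 = 1) (hAneg : ∀ j : ℤ, j < 0 → A j = 0)
    (hBle : ∀ j : ℤ, j ≤ 0 → B j = 0)
    (hA : ∀ j : ℤ, 1 ≤ j → A j = 2 ^ (j - 1).toNat - (A (j - p) + B (j - p)))
    (hB : ∀ j : ℤ, 1 ≤ j → B j = 2 * (A (j - p) + B (j - p))) :
    (∀ j : ℤ, p ≤ j → 2 ^ (j - 1).toNat < A j + B j) ∧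
    (∀ j : ℤ, 1 ≤ j → (A j + B j = 2 ^ (j - 1).toNat ↔ j ≤ p - 1)) := by
  have hp₀ : 0 < p := by omega
  have hneg : ∀ j, j < 0 → A j + B j = 0 := fun j hj => by rw [hAneg j hj, hBle j hj.le, add_zero]
  have h0 : 0 < A 0 + B 0 := by rw [hA0, hBle 0 le_rfl]; norm_num
  have hrec : ∀ j, 1 ≤ j → A j + B j = 2 ^ (j - 1).toNat + (A (j - p) + B (j - p)) :=
    fun j hj => by rw [hA j hj, hB j hj]; ring
  have hgt := fun j => pow_lt_of_delayed_pow_rec (S := fun j => A j + B j) hp₀ hneg h0 hrec (j := j)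
  refine ⟨hgt, fun j hj => ⟨fun heq => ?_, fun hjp => eq_pow_of_delayed_pow_rec
    (S := fun j => A j + B j) hneg hrec hj (by omega)⟩⟩
  by_contra hjp
  exact (hgt j (by omega)).ne' heq
end
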